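/- arXiv:2310.12096 — 2 statements merged into one kernel-verified Lean document; each statement's English description precedes it below -/
import Mathlib

section
/- In any directed weighted graph on n vertices with source s and sink t, the number of loose edges (vital edges that are not saturated in any maximum (s,t)-flow) is at most n − 2. -/
open Finset

variable {V : Type*} [Fintype V] [DecidableEq V]

/-- capacity of the cut given by the source-side vertex set `C`:
total capacity of edges with tail in `C` and head outside `C`. -/
noncomputable def cutCap (E : Finset (V × V)) (w : V × V → ℝ) (C : Finset V) : ℝ :=
  ∑ e ∈ E.filter (fun e => e.1 ∈ C ∧ e.2 ∉ C), w e

/-- `C` is an (s,t)-cut. -/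
def IsCut (s t : V) (C : Finset V) : Prop := s ∈ C ∧ t ∉ C

/-- edge `e` is a contributing (outgoing) edge of the cut `C`. -/
def Contributes (e : V × V) (C : Finset V) : Prop := e.1 ∈ C ∧ e.2 ∉ C

/-- `f` is a feasible (s,t)-flow on edge set `E` with capacities `w`. -/
structure IsFlow (E : Finset (V × V)) (w : V × V → ℝ) (s t : V) (f : V × V → ℝ) : Prop where
  nonneg : ∀ e ∈ E, 0 ≤ f e
  le_cap : ∀ e ∈ E, f e ≤ w e
  support : ∀ e, e ∉ E → f e = 0
  conserve : ∀ v, v ≠ s → v ≠ t →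
    ∑ e ∈ E.filter (fun e => e.1 = v), f e = ∑ e ∈ E.filter (fun e => e.2 = v), f e

/-- value of an (s,t)-flow: the net flow out of `s`. -/
noncomputable def flowValue (E : Finset (V × V)) (s : V) (f : V × V → ℝ) : ℝ :=
  ∑ e ∈ E.filter (fun e => e.1 = s), f e - ∑ e ∈ E.filter (fun e => e.2 = s), f e

/-- `f` is a maximum (s,t)-flow. -/
def IsMaxFlow (E : Finset (V × V)) (w : V × V → ℝ) (s t : V) (f : V × V → ℝ) : Prop :=
  IsFlow E w s t f ∧ ∀ g, IsFlow E w s t g → flowValue E s g ≤ flowValue E s f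

/-- capacity of a minimum (s,t)-cut. -/
noncomputable def minCutCap (E : Finset (V × V)) (w : V × V → ℝ) (s t : V) : ℝ :=
  sInf {x | ∃ C : Finset V, IsCut s t C ∧ cutCap E w C = x}

/-- `e` is a vital edge: deleting it strictly decreases the min (s,t)-cut capacity. -/
def Vital (E : Finset (V × V)) (w : V × V → ℝ) (s t : V) (e : V × V) : Prop :=
  e ∈ E ∧ minCutCap (E.erase e) w s t < minCutCap E w s t

/-- `C` is a mincut for the edge `e`: a least-capacity (s,t)-cut in which `e` contributes. -/
def IsMincutFor (E : Finset (V × V)) (w : V × V → ℝ) (s t : V) (e : V × V)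
    (C : Finset V) : Prop :=
  IsCut s t C ∧ Contributes e C ∧
    ∀ C', IsCut s t C' → Contributes e C' → cutCap E w C ≤ cutCap E w C'

/-- total flow on edges leaving the cut `C`. -/
noncomputable def flowOut (E : Finset (V × V)) (f : V × V → ℝ) (C : Finset V) : ℝ :=
  ∑ e ∈ E.filter (fun e => e.1 ∈ C ∧ e.2 ∉ C), f e

/-- total flow on edges entering the cut `C`. -/
noncomputable def flowIn (E : Finset (V × V)) (f : V × V → ℝ) (C : Finset V) : ℝ :=
  ∑ e ∈ E.filter (fun e => e.1 ∉ C ∧ e.2 ∈ C), f e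


/-!
Fix a maximum flow `f`. By max-flow min-cut, a vital edge carries positive flow in every
maximum flow (otherwise `f` would survive its deletion with undiminished value), so every loose
edge `e` has `0 < f e < w e`. Now let `d` be a nonzero function supported on the loose edges
whose net outflow vanishes at every vertex other than `s` and `t`. Moving `f` along `d`, with
the sign chosen so that the value does not drop, until some loose edge becomes empty or
saturated yields a maximum flow contradicting vitality or looseness of that edge. Hence
`d ↦ (net outflow of d at the n - 2 inner vertices)` is injective on functions supported on
the loose edges, so there are at most `n - 2` loose edges.
-/

section NetOutflow

variable (E : Finset (V × V))

noncomputable def netOutflow : (V × V → ℝ) →ₗ[ℝ] V → ℝ :=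
  LinearMap.pi fun v =>
    ∑ e ∈ E with e.1 = v, LinearMap.proj e - ∑ e ∈ E with e.2 = v, LinearMap.proj e

omit [Fintype V] in
lemma netOutflow_apply (g : V × V → ℝ) (v : V) :
    netOutflow E g v = ∑ e ∈ E with e.1 = v, g e - ∑ e ∈ E with e.2 = v, g e := by
  simp [netOutflow]

omit [Fintype V] in
lemma flowValue_eq_netOutflow (s : V) (f : V × V → ℝ) :
    flowValue E s f = netOutflow E f s :=
  (netOutflow_apply E f s).symm

omit [Fintype V] in
lemma netOutflow_eq_zero_of_forall_mem {d : V × V → ℝ} (hd : ∀ e ∈ E, d e = 0) :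
    netOutflow E d = 0 := by
  funext v
  rw [netOutflow_apply, sum_eq_zero fun e he => hd e (mem_filter.1 he).1,
    sum_eq_zero fun e he => hd e (mem_filter.1 he).1, sub_zero, Pi.zero_apply]

omit [Fintype V] in
lemma netOutflow_single {e : V × V} (he : e ∈ E) :
    netOutflow E (Pi.single e 1) = Pi.single e.1 1 - Pi.single e.2 1 := by
  funext v
  simp [netOutflow_apply, he, Pi.single_apply, eq_comm]

omit [Fintype V] in
lemma sum_netOutflow (g : V × V → ℝ) (C : Finset V) :
    ∑ v ∈ C, netOutflow E g v = flowOut E g C - flowIn E g C := by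
  have hcount : ∀ e : V × V,
      ((if e.1 ∈ C then g e else 0) - if e.2 ∈ C then g e else 0) =
        (if e.1 ∈ C ∧ e.2 ∉ C then g e else 0) -
          if e.1 ∉ C ∧ e.2 ∈ C then g e else 0 := by
    intro e
    by_cases h1 : e.1 ∈ C <;> by_cases h2 : e.2 ∈ C <;> simp [h1, h2]
  simp only [netOutflow_apply, sum_sub_distrib, sum_filter]
  rw [sum_comm, sum_comm (s := C), ← sum_sub_distrib]
  simp only [sum_ite_eq, hcount, sum_sub_distrib, flowOut, flowIn, sum_filter]

end NetOutflow

section WeakDuality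

variable {E : Finset (V × V)} {w : V × V → ℝ} {s t : V} {f : V × V → ℝ}

omit [Fintype V] in
lemma IsFlow.netOutflow_eq_zero (hf : IsFlow E w s t f) {v : V} (hvs : v ≠ s) (hvt : v ≠ t) :
    netOutflow E f v = 0 := by
  rw [netOutflow_apply, hf.conserve v hvs hvt, sub_self]

omit [Fintype V] in
lemma IsFlow.flowValue_eq_flowOut_sub_flowIn (hf : IsFlow E w s t f) {C : Finset V}
    (hC : IsCut s t C) : flowValue E s f = flowOut E f C - flowIn E f C := by
  rw [← sum_netOutflow, sum_eq_single_of_mem s hC.1, flowValue_eq_netOutflow]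
  exact fun v hv hvs => hf.netOutflow_eq_zero hvs (ne_of_mem_of_not_mem hv hC.2)

omit [Fintype V] in
lemma IsFlow.flowValue_le_cutCap (hf : IsFlow E w s t f) {C : Finset V} (hC : IsCut s t C) :
    flowValue E s f ≤ cutCap E w C := by
  have hout : flowOut E f C ≤ cutCap E w C :=
    sum_le_sum fun e he => hf.le_cap e (mem_filter.1 he).1
  have hin : 0 ≤ flowIn E f C := sum_nonneg fun e he => hf.nonneg e (mem_filter.1 he).1
  rw [hf.flowValue_eq_flowOut_sub_flowIn hC]
  linarith

lemma finite_cutCaps : {x | ∃ C : Finset V, IsCut s t C ∧ cutCap E w C = x}.Finite :=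
  (Set.finite_range (cutCap E w)).subset fun _ ⟨C, _, hC⟩ => ⟨C, hC⟩

lemma minCutCap_le {C : Finset V} (hC : IsCut s t C) : minCutCap E w s t ≤ cutCap E w C :=
  csInf_le finite_cutCaps.bddBelow ⟨C, hC, rfl⟩

lemma exists_cutCap_eq_minCutCap (hst : s ≠ t) :
    ∃ C, IsCut s t C ∧ cutCap E w C = minCutCap E w s t := by
  have hne : {x | ∃ C : Finset V, IsCut s t C ∧ cutCap E w C = x}.Nonempty :=
    ⟨_, {s}, ⟨mem_singleton_self s, by simpa using hst.symm⟩, rfl⟩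
  exact hne.csInf_mem finite_cutCaps

lemma IsFlow.flowValue_le_minCutCap (hst : s ≠ t) (hf : IsFlow E w s t f) :
    flowValue E s f ≤ minCutCap E w s t := by
  obtain ⟨C, hC, hcap⟩ := exists_cutCap_eq_minCutCap (E := E) (w := w) hst
  exact hcap ▸ hf.flowValue_le_cutCap hC

end WeakDuality

section Existence

variable {E : Finset (V × V)} {w : V × V → ℝ} {s t : V}

lemma isClosed_setOf_isFlow : IsClosed {f | IsFlow E w s t f} := by
  have hnet : ∀ v, Continuous fun f : V × V → ℝ => netOutflow E f v := fun v =>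
    (continuous_apply v).comp (netOutflow E).continuous_of_finiteDimensional
  have hflow : {f | IsFlow E w s t f} =
      {f | ∀ e ∈ E, 0 ≤ f e} ∩ {f | ∀ e ∈ E, f e ≤ w e} ∩ {f | ∀ e ∉ E, f e = 0} ∩
        {f | ∀ v, v ≠ s → v ≠ t → netOutflow E f v = 0} := by
    ext f
    refine ⟨fun hf => ⟨⟨⟨hf.nonneg, hf.le_cap⟩, hf.support⟩,
      fun v hvs hvt => hf.netOutflow_eq_zero hvs hvt⟩, ?_⟩
    rintro ⟨⟨⟨hnonneg, hcap⟩, hsupp⟩, hcons⟩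
    refine ⟨hnonneg, hcap, hsupp, fun v hvs hvt => ?_⟩
    rw [← sub_eq_zero, ← netOutflow_apply]
    exact hcons v hvs hvt
  rw [hflow]
  simp only [Set.ofPred_forall]
  refine .inter (.inter (.inter ?_ ?_) ?_) ?_
  · exact isClosed_biInter fun e _ => isClosed_le continuous_const (continuous_apply e)
  · exact isClosed_biInter fun e _ => isClosed_le (continuous_apply e) continuous_const
  · exact isClosed_biInter fun e _ => isClosed_eq (continuous_apply e) continuous_const
  · exact isClosed_iInter fun v => isClosed_iInter fun _ =>
      isClosed_iInter fun _ => isClosed_eq (hnet v) continuous_const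

lemma exists_isMaxFlow (hw : ∀ e ∈ E, 0 ≤ w e) : ∃ f, IsMaxFlow E w s t f := by
  have hzero : IsFlow E w s t 0 := ⟨fun _ _ => le_rfl, hw, fun _ _ => rfl, fun _ _ _ => by simp⟩
  have hbox : {f | IsFlow E w s t f} ⊆ Set.univ.pi fun e => Set.Icc 0 (max (w e) 0) := by
    intro f hf e _
    by_cases he : e ∈ E
    · exact ⟨hf.nonneg e he, le_max_of_le_left (hf.le_cap e he)⟩
    · exact ⟨(hf.support e he).ge, (hf.support e he).le.trans (le_max_right _ _)⟩
  have hcompact : IsCompact {f | IsFlow E w s t f} :=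
    (isCompact_univ_pi fun _ => isCompact_Icc).of_isClosed_subset isClosed_setOf_isFlow hbox
  have hcont : Continuous (flowValue E s) := by
    simp only [funext (flowValue_eq_netOutflow E s)]
    exact (continuous_apply s).comp (netOutflow E).continuous_of_finiteDimensional
  obtain ⟨f, hf, hmax⟩ := hcompact.exists_isMaxOn ⟨0, hzero⟩ hcont.continuousOn
  exact ⟨f, hf, fun g hg => hmax hg⟩

end Existence

lemma exists_tight_step {ι : Type*} (T : Finset ι) {x w d : ι → ℝ}
    (hx : ∀ i ∈ T, 0 ≤ x i ∧ x i ≤ w i) (hneg : ∀ i ∈ T, d i < 0 → 0 < x i)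
    (hpos : ∀ i ∈ T, 0 < d i → x i < w i) (hd : ∃ i ∈ T, d i ≠ 0) :
    ∃ η > 0, (∀ i ∈ T, 0 ≤ x i + η * d i ∧ x i + η * d i ≤ w i) ∧
      ∃ i ∈ T, d i ≠ 0 ∧ (x i + η * d i = 0 ∨ x i + η * d i = w i) := by
  classical
  set T' := T.filter fun i => d i ≠ 0
  -- room left in coordinate `i` when moving in the direction of `d i`
  let slack : ι → ℝ := fun i => if 0 < d i then w i - x i else x i
  have hslack : ∀ i ∈ T', 0 < slack i := by
    intro i hi
    obtain ⟨hiT, hdi⟩ := mem_filter.1 hi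
    simp only [slack]
    split_ifs with h
    · linarith [hpos i hiT h]
    · exact hneg i hiT (lt_of_le_of_ne (not_lt.1 h) hdi)
  have hstep : ∀ i ∈ T, ∀ η, 0 ≤ η → η * |d i| ≤ slack i →
      0 ≤ x i + η * d i ∧ x i + η * d i ≤ w i := by
    intro i hi η hη h
    obtain ⟨hx0, hxw⟩ := hx i hi
    simp only [slack] at h
    split_ifs at h with hdi
    · rw [abs_of_pos hdi] at h
      constructor <;> nlinarith
    · rw [abs_of_nonpos (not_lt.1 hdi)] at h
      constructor <;> nlinarith
  obtain ⟨i, hiT, hdi⟩ := hd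
  obtain ⟨i₀, hi₀, hmin⟩ :=
    T'.exists_min_image (fun i => slack i / |d i|) ⟨i, mem_filter.2 ⟨hiT, hdi⟩⟩
  obtain ⟨hi₀T, hdi₀⟩ := mem_filter.1 hi₀
  have hη : 0 < slack i₀ / |d i₀| := div_pos (hslack i₀ hi₀) (abs_pos.2 hdi₀)
  refine ⟨slack i₀ / |d i₀|, hη, fun i hi => ?_, i₀, hi₀T, hdi₀, ?_⟩
  · by_cases hdi : d i = 0
    · simpa [hdi] using hx i hi
    refine hstep i hi _ hη.le ?_
    calc slack i₀ / |d i₀| * |d i| ≤ slack i / |d i| * |d i| :=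
          mul_le_mul_of_nonneg_right (hmin i (mem_filter.2 ⟨hi, hdi⟩)) (abs_nonneg _)
      _ = slack i := div_mul_cancel₀ _ (abs_ne_zero.2 hdi)
  · simp only [slack]
    split_ifs with h
    · right
      rw [abs_of_pos h, div_mul_cancel₀ _ h.ne']
      ring
    · left
      rw [abs_of_nonpos (not_lt.1 h), div_neg, neg_mul, div_mul_cancel₀ _ hdi₀]
      ring

section FeasibleDirection

variable {E : Finset (V × V)} {w : V × V → ℝ} {s t : V} {f : V × V → ℝ}

structure IsFeasibleDirection (E : Finset (V × V)) (w f d : V × V → ℝ) : Prop where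
  support : ∀ e ∉ E, d e = 0
  pos_of_neg : ∀ e ∈ E, d e < 0 → 0 < f e
  lt_cap_of_pos : ∀ e ∈ E, 0 < d e → f e < w e

omit [Fintype V] [DecidableEq V] in
lemma IsFeasibleDirection.zero : IsFeasibleDirection E w f 0 :=
  ⟨fun _ _ => rfl, fun _ _ h => absurd h (lt_irrefl 0), fun _ _ h => absurd h (lt_irrefl 0)⟩

omit [Fintype V] [DecidableEq V] in
lemma IsFeasibleDirection.add {d d' : V × V → ℝ} (hd : IsFeasibleDirection E w f d)
    (hd' : IsFeasibleDirection E w f d') : IsFeasibleDirection E w f (d + d') := by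
  refine ⟨fun e he => by simp [hd.support e he, hd'.support e he], fun e he h => ?_,
    fun e he h => ?_⟩
  · rcases lt_or_ge (d e) 0 with h₁ | h₁
    · exact hd.pos_of_neg e he h₁
    · exact hd'.pos_of_neg e he (by simp only [Pi.add_apply] at h; linarith)
  · rcases lt_or_ge 0 (d e) with h₁ | h₁
    · exact hd.lt_cap_of_pos e he h₁
    · exact hd'.lt_cap_of_pos e he (by simp only [Pi.add_apply] at h; linarith)

omit [Fintype V] in
lemma isFeasibleDirection_single {e : V × V} (he : e ∈ E) (hlt : f e < w e) :
    IsFeasibleDirection E w f (Pi.single e 1) := by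
  refine ⟨fun a ha => Pi.single_eq_of_ne (ne_of_mem_of_not_mem he ha).symm _, fun a _ h => ?_,
    fun a _ h => ?_⟩
  · rw [Pi.single_apply] at h
    split_ifs at h <;> norm_num at h
  · rw [Pi.single_apply] at h
    split_ifs at h with hae
    · exact hae ▸ hlt
    · exact absurd h (lt_irrefl 0)

omit [Fintype V] in
lemma isFeasibleDirection_neg_single {e : V × V} (he : e ∈ E) (hpos : 0 < f e) :
    IsFeasibleDirection E w f (-Pi.single e 1) := by
  refine ⟨fun a ha => by simp [Pi.single_eq_of_ne (ne_of_mem_of_not_mem he ha).symm],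
    fun a _ h => ?_, fun a _ h => ?_⟩
  · rw [Pi.neg_apply, Pi.single_apply] at h
    split_ifs at h with hae
    · exact hae ▸ hpos
    · simp at h
  · rw [Pi.neg_apply, Pi.single_apply] at h
    split_ifs at h <;> norm_num at h

omit [Fintype V] in
lemma IsFlow.exists_tight_add_smul (hf : IsFlow E w s t f) {d : V × V → ℝ}
    (hd : IsFeasibleDirection E w f d) (hcons : ∀ v, v ≠ s → v ≠ t → netOutflow E d v = 0)
    (hne : ∃ e ∈ E, d e ≠ 0) :
    ∃ η > 0, IsFlow E w s t (f + η • d) ∧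
      flowValue E s (f + η • d) = flowValue E s f + η * netOutflow E d s ∧
      ∃ e ∈ E, d e ≠ 0 ∧ ((f + η • d) e = 0 ∨ (f + η • d) e = w e) := by
  obtain ⟨η, hη, hbox, htight⟩ :=
    exists_tight_step E (fun e he => ⟨hf.nonneg e he, hf.le_cap e he⟩) hd.pos_of_neg
      hd.lt_cap_of_pos hne
  refine ⟨η, hη, ⟨fun e he => (hbox e he).1, fun e he => (hbox e he).2, fun e he => ?_,
    fun v hvs hvt => ?_⟩, ?_, htight⟩
  · simp [hf.support e he, hd.support e he]
  · rw [← sub_eq_zero, ← netOutflow_apply, map_add, map_smul, Pi.add_apply, Pi.smul_apply,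
      hf.netOutflow_eq_zero hvs hvt, hcons v hvs hvt, smul_zero, add_zero]
  · simp only [flowValue_eq_netOutflow, map_add, map_smul, Pi.add_apply, Pi.smul_apply,
      smul_eq_mul]

end FeasibleDirection

def Residual (E : Finset (V × V)) (w f : V × V → ℝ) (a b : V) : Prop :=
  ((a, b) ∈ E ∧ f (a, b) < w (a, b)) ∨ ((b, a) ∈ E ∧ 0 < f (b, a))

section MaxFlowMinCut

variable {E : Finset (V × V)} {w : V × V → ℝ} {s t : V} {f : V × V → ℝ}

omit [Fintype V] in
lemma exists_feasibleDirection_of_residual {a b : V} (h : Residual E w f a b) :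
    ∃ d, IsFeasibleDirection E w f d ∧ netOutflow E d = Pi.single a 1 - Pi.single b 1 := by
  rcases h with ⟨hE, hlt⟩ | ⟨hE, hpos⟩
  · exact ⟨_, isFeasibleDirection_single hE hlt, netOutflow_single E hE⟩
  · refine ⟨_, isFeasibleDirection_neg_single hE hpos, ?_⟩
    rw [map_neg, netOutflow_single E hE, neg_sub]

omit [Fintype V] in
lemma exists_feasibleDirection_of_reflTransGen {v : V}
    (h : Relation.ReflTransGen (Residual E w f) s v) :
    ∃ d, IsFeasibleDirection E w f d ∧ netOutflow E d = Pi.single s 1 - Pi.single v 1 := by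
  induction h with
  | refl => exact ⟨0, .zero, by rw [map_zero, sub_self]⟩
  | tail _ hstep ih =>
    obtain ⟨d, hd, hnet⟩ := ih
    obtain ⟨d', hd', hnet'⟩ := exists_feasibleDirection_of_residual hstep
    exact ⟨d + d', hd.add hd', by rw [map_add, hnet, hnet', sub_add_sub_cancel]⟩

omit [Fintype V] in
lemma IsMaxFlow.not_reflTransGen_residual (hst : s ≠ t) (hf : IsMaxFlow E w s t f) :
    ¬ Relation.ReflTransGen (Residual E w f) s t := by
  intro h
  obtain ⟨d, hd, hnet⟩ := exists_feasibleDirection_of_reflTransGen h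
  have hnet_s : netOutflow E d s = 1 := by simp [hnet, hst]
  have hcons : ∀ v, v ≠ s → v ≠ t → netOutflow E d v = 0 := fun v hvs hvt => by
    simp [hnet, hvs, hvt]
  have hne : ∃ e ∈ E, d e ≠ 0 := by
    by_contra! h0
    simp [netOutflow_eq_zero_of_forall_mem E h0] at hnet_s
  obtain ⟨η, hη, hflow, hvalue, -⟩ := hf.1.exists_tight_add_smul hd hcons hne
  have := hf.2 _ hflow
  rw [hvalue, hnet_s] at this
  linarith

lemma IsMaxFlow.flowValue_eq_minCutCap (hst : s ≠ t) (hf : IsMaxFlow E w s t f) :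
    flowValue E s f = minCutCap E w s t := by
  classical
  refine le_antisymm (hf.1.flowValue_le_minCutCap hst) ?_
  set C : Finset V := univ.filter (Relation.ReflTransGen (Residual E w f) s)
  have hC : IsCut s t C :=
    ⟨by simp [C, Relation.ReflTransGen.refl],
      by simpa [C] using hf.not_reflTransGen_residual hst⟩
  have hout : flowOut E f C = cutCap E w C := sum_congr rfl fun e he => by
    obtain ⟨heE, he₁, he₂⟩ := mem_filter.1 he
    by_contra hne
    exact he₂ (mem_filter.2 ⟨mem_univ _, (mem_filter.1 he₁).2.tail
      (Or.inl ⟨heE, lt_of_le_of_ne (hf.1.le_cap e heE) hne⟩)⟩)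
  have hin : flowIn E f C = 0 := sum_eq_zero fun e he => by
    obtain ⟨heE, he₁, he₂⟩ := mem_filter.1 he
    by_contra hne
    exact he₁ (mem_filter.2 ⟨mem_univ _, (mem_filter.1 he₂).2.tail
      (Or.inr ⟨heE, lt_of_le_of_ne (hf.1.nonneg e heE) (Ne.symm hne)⟩)⟩)
  calc minCutCap E w s t ≤ cutCap E w C := minCutCap_le hC
    _ = flowValue E s f := by rw [hf.1.flowValue_eq_flowOut_sub_flowIn hC, hout, hin, sub_zero]

omit [Fintype V] in
lemma IsFlow.erase (hf : IsFlow E w s t f) {e : V × V} (he : f e = 0) :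
    IsFlow (E.erase e) w s t f := by
  refine ⟨fun a ha => hf.nonneg a (mem_of_mem_erase ha),
    fun a ha => hf.le_cap a (mem_of_mem_erase ha), fun a ha => ?_, fun v hvs hvt => ?_⟩
  · by_cases hae : a = e
    · exact hae ▸ he
    · exact hf.support a fun haE => ha (mem_erase.2 ⟨hae, haE⟩)
  · rw [filter_erase, filter_erase, sum_erase _ he, sum_erase _ he]
    exact hf.conserve v hvs hvt

omit [Fintype V] in
lemma flowValue_erase {e : V × V} (he : f e = 0) :
    flowValue (E.erase e) s f = flowValue E s f := by
  simp only [flowValue, filter_erase, sum_erase _ he]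

lemma IsMaxFlow.pos_of_vital (hst : s ≠ t) (hf : IsMaxFlow E w s t f) {e : V × V}
    (he : Vital E w s t e) : 0 < f e := by
  refine (hf.1.nonneg e he.1).lt_of_ne' fun h0 => ?_
  have := (hf.1.erase h0).flowValue_le_minCutCap hst
  rw [flowValue_erase h0, hf.flowValue_eq_minCutCap hst] at this
  exact this.not_gt he.2

end MaxFlowMinCut

def IsLoose (E : Finset (V × V)) (w : V × V → ℝ) (s t : V) (e : V × V) : Prop :=
  Vital E w s t e ∧ ∀ f, IsMaxFlow E w s t f → f e < w e

section Loose

variable {E : Finset (V × V)} {w : V × V → ℝ} {s t : V} {f : V × V → ℝ}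

lemma IsMaxFlow.eq_zero_of_support_loose (hst : s ≠ t) (hf : IsMaxFlow E w s t f)
    {d : V × V → ℝ} (hloose : ∀ e, d e ≠ 0 → IsLoose E w s t e)
    (hcons : ∀ v, v ≠ s → v ≠ t → netOutflow E d v = 0) : d = 0 := by
  wlog hval : 0 ≤ netOutflow E d s generalizing d
  · refine neg_eq_zero.1 (this (fun e he => hloose e (by simpa using he))
      (fun v hvs hvt => by simp [hcons v hvs hvt]) ?_)
    simp only [map_neg, Pi.neg_apply]
    linarith
  by_contra hd
  obtain ⟨e₀, he₀⟩ := Function.ne_iff.1 hd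
  have hdir : IsFeasibleDirection E w f d :=
    ⟨fun e he => by_contra fun h => he (hloose e h).1.1,
      fun e _ h => hf.pos_of_vital hst (hloose e h.ne).1,
      fun e _ h => (hloose e h.ne').2 f hf⟩
  obtain ⟨η, hη, hflow, hvalue, e, -, hde, htight⟩ :=
    hf.1.exists_tight_add_smul hdir hcons ⟨e₀, (hloose e₀ he₀).1.1, he₀⟩
  have hmax : IsMaxFlow E w s t (f + η • d) :=
    ⟨hflow, fun g hg => (hf.2 g hg).trans (by rw [hvalue]; nlinarith)⟩
  rcases htight with hzero | hsat
  · exact (hmax.pos_of_vital hst (hloose e hde).1).ne' hzero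
  · exact ((hloose e hde).2 _ hmax).ne hsat

end Loose

theorem card_loose_edges_le_general (E : Finset (V × V)) (w : V × V → ℝ) (s t : V)
    (hst : s ≠ t) (hpos : ∀ e ∈ E, 0 < w e) :
    Set.ncard {e : V × V | e ∈ E ∧ Vital E w s t e ∧
        ∀ f, IsMaxFlow E w s t f → f e < w e}
      ≤ Fintype.card V - 2 := by
  classical
  obtain ⟨f, hf⟩ := exists_isMaxFlow (s := s) (t := t) fun e he => (hpos e he).le
  set S := {e : V × V | e ∈ E ∧ Vital E w s t e ∧ ∀ f, IsMaxFlow E w s t f → f e < w e}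
  set I : Finset V := {s, t}ᶜ
  let Φ : (S → ℝ) →ₗ[ℝ] I → ℝ :=
    LinearMap.funLeft ℝ ℝ Subtype.val ∘ₗ netOutflow E ∘ₗ
      Function.ExtendByZero.linearMap ℝ Subtype.val
  have hΦ : Function.Injective Φ := by
    refine (injective_iff_map_eq_zero Φ).2 fun c hc => funext fun e => ?_
    have hext := hf.eq_zero_of_support_loose hst (d := Function.extend Subtype.val c 0)
      (fun e he => ?_) (fun v hvs hvt => ?_)
    · simpa [Subtype.val_injective.extend_apply] using congr_fun hext e
    · by_cases heS : e ∈ S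
      · exact ⟨heS.2.1, heS.2.2⟩
      · exact absurd (Function.extend_apply' _ _ _ fun ⟨e', he'⟩ => heS (he' ▸ e'.2)) he
    · exact congr_fun hc ⟨v, by simp [I, hvs, hvt]⟩
  calc S.ncard = Module.finrank ℝ (S → ℝ) := by
        rw [Module.finrank_fintype_fun_eq_card, ← Nat.card_eq_fintype_card, Nat.card_coe_set_eq]
    _ ≤ Module.finrank ℝ (I → ℝ) := LinearMap.finrank_le_finrank_of_injective hΦ
    _ = Fintype.card V - 2 := by
        rw [Module.finrank_fintype_fun_eq_card, Fintype.card_coe, card_compl, card_pair hst]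

/-- the number of loose edges is at most `n - 2`. -/
theorem card_loose_edges_le (E : Finset (V × V)) (w : V × V → ℝ) (s t : V)
    (hst : s ≠ t) (hpos : ∀ e ∈ E, 0 < w e) (hn : 2 ≤ Fintype.card V) :
    Set.ncard {e : V × V | e ∈ E ∧ Vital E w s t e ∧
        ∀ f, IsMaxFlow E w s t f → f e < w e}
      ≤ Fintype.card V - 2 :=
  card_loose_edges_le_general E w s t hst hpos
end

section
/- For any directed weighted graph G on n vertices with source s and sink t, there exists a set of at most n − 1 (s,t)-cuts such that for every vital edge e of G, at least one cut in the set is a mincut for e (a least-capacity (s,t)-cut in which e contributes). -/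
/-!
For a vital edge `e`, the mincut for `e` of least size is, by uncrossing (submodularity of the cut
capacity), contained in every mincut for `e`. Uncrossing also shows that a vital edge `e₁` never
enters such a minimal mincut `M₂` of another vital edge, and never leaves it either when `M₂` is
lexicographically at most (capacity, size) the minimal mincut `M₁` of `e₁`. Hence, evaluating
at the ends of edges (and at `t`), the indicator vectors of `{t}` and of the distinct minimal
mincuts form a triangular, hence independent, family in `ℝ^V`: there are at most `n - 1` of them.
-/

open Finset

variable {V : Type*} [Fintype V] [DecidableEq V]

section LinearAlgebra

variable {R M ι : Type*} [Ring R] [NoZeroDivisors R] [AddCommGroup M] [Module R M]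

theorem linearIndepOn_of_exists_separating {v : ι → M} {s : Finset ι}
    (h : ∀ t ⊆ s, t.Nonempty →
      ∃ i ∈ t, ∃ φ : M →ₗ[R] R, φ (v i) ≠ 0 ∧ ∀ j ∈ t, j ≠ i → φ (v j) = 0) :
    LinearIndepOn R v s := by
  classical
  rw [linearIndepOn_finset_iff]
  intro f
  suffices ∀ t ⊆ s, ∑ i ∈ t, f i • v i = 0 → ∀ i ∈ t, f i = 0 from this s Subset.rfl
  intro t
  induction t using Finset.strongInduction with
  | H t ih =>
    intro hts hsum
    rcases t.eq_empty_or_nonempty with rfl | hne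
    · simp
    obtain ⟨i, hi, φ, hφi, hφ⟩ := h t hts hne
    have hfi : f i = 0 := by
      have hφsum := congrArg φ hsum
      rw [map_sum, sum_eq_single_of_mem i hi fun j hj hji => by rw [map_smul, hφ j hj hji,
        smul_zero], map_smul, map_zero, smul_eq_mul] at hφsum
      exact (mul_eq_zero.1 hφsum).resolve_right hφi
    have hrest := ih (t.erase i) (erase_ssubset hi) ((erase_subset i t).trans hts)
      (by rwa [sum_erase t (by simp [hfi])])
    intro j hj
    by_cases hji : j = i
    · exact hji ▸ hfi
    · exact hrest j (mem_erase.2 ⟨hji, hj⟩)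

end LinearAlgebra

section Cuts

omit [Fintype V]

variable {E : Finset (V × V)} {w : V × V → ℝ} {s t : V} {e : V × V} {A B C M : Finset V}

theorem Contributes.inter (hA : Contributes e A) (hB : Contributes e B) :
    Contributes e (A ∩ B) :=
  ⟨mem_inter.2 ⟨hA.1, hB.1⟩, fun h => hA.2 (mem_inter.1 h).1⟩

theorem Contributes.union (hA : Contributes e A) (hB : Contributes e B) :
    Contributes e (A ∪ B) :=
  ⟨mem_union_left B hA.1, by simp [hA.2, hB.2]⟩

theorem IsCut.inter (hA : IsCut s t A) (hB : IsCut s t B) : IsCut s t (A ∩ B) :=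
  Contributes.inter (e := (s, t)) hA hB

theorem IsCut.union (hA : IsCut s t A) (hB : IsCut s t B) : IsCut s t (A ∪ B) :=
  Contributes.union (e := (s, t)) hA hB

noncomputable def crossCap (E : Finset (V × V)) (w : V × V → ℝ) (A B : Finset V) : ℝ :=
  ∑ e ∈ E.filter (fun e => e.1 ∈ A \ B ∧ e.2 ∈ B \ A), w e

theorem cutCap_inter_add_cutCap_union (E : Finset (V × V)) (w : V × V → ℝ) (A B : Finset V) :
    cutCap E w (A ∩ B) + cutCap E w (A ∪ B) + crossCap E w A B + crossCap E w B A
      = cutCap E w A + cutCap E w B := by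
  simp only [cutCap, crossCap, sum_filter, ← sum_add_distrib]
  refine sum_congr rfl fun e _ => ?_
  by_cases h1 : e.1 ∈ A <;> by_cases h2 : e.1 ∈ B <;> by_cases h3 : e.2 ∈ A <;>
    by_cases h4 : e.2 ∈ B <;> simp [h1, h2, h3, h4]

theorem crossCap_nonneg (hw : ∀ e ∈ E, 0 ≤ w e) (A B : Finset V) : 0 ≤ crossCap E w A B :=
  sum_nonneg fun e he => hw e (mem_filter.1 he).1

theorem le_crossCap (hw : ∀ e ∈ E, 0 ≤ w e) (he : e ∈ E) (h₁ : e.1 ∈ A \ B) (h₂ : e.2 ∈ B \ A) :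
    w e ≤ crossCap E w A B :=
  single_le_sum (fun e he => hw e (mem_filter.1 he).1) (mem_filter.2 ⟨he, h₁, h₂⟩)

theorem cutCap_inter_add_cutCap_union_le (hw : ∀ e ∈ E, 0 ≤ w e) (A B : Finset V) :
    cutCap E w (A ∩ B) + cutCap E w (A ∪ B) ≤ cutCap E w A + cutCap E w B := by
  linarith [cutCap_inter_add_cutCap_union E w A B, crossCap_nonneg hw A B,
    crossCap_nonneg hw B A]

theorem cutCap_erase_of_contributes (he : e ∈ E) (hC : Contributes e C) :
    cutCap (E.erase e) w C = cutCap E w C - w e := by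
  rw [cutCap, cutCap, filter_erase, sum_erase_eq_sub (mem_filter.2 ⟨he, hC⟩)]

theorem cutCap_erase_of_not_contributes (hC : ¬Contributes e C) :
    cutCap (E.erase e) w C = cutCap E w C := by
  rw [cutCap, cutCap, filter_erase, erase_eq_of_notMem]
  exact fun h => hC (mem_filter.1 h).2

theorem IsMincutFor.of_cutCap_le (hM : IsMincutFor E w s t e M) (hC : IsCut s t C)
    (he : Contributes e C) (hle : cutCap E w C ≤ cutCap E w M) : IsMincutFor E w s t e C :=
  ⟨hC, he, fun _ hC' he' => hle.trans (hM.2.2 _ hC' he')⟩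

def IsMinimalMincutFor (E : Finset (V × V)) (w : V × V → ℝ) (s t : V) (e : V × V)
    (M : Finset V) : Prop :=
  IsMincutFor E w s t e M ∧ ∀ C, IsMincutFor E w s t e C → M ⊆ C

theorem IsMinimalMincutFor.eq_of_contributes (hM : IsMinimalMincutFor E w s t e M)
    (hC : IsCut s t C) (he : Contributes e C)
    (hle : toLex (cutCap E w C, C.card) ≤ toLex (cutCap E w M, M.card)) : C = M := by
  obtain ⟨hcap, hcard⟩ := Prod.Lex.toLex_le_toLex'.1 hle
  have heq : cutCap E w C = cutCap E w M := le_antisymm hcap (hM.1.2.2 C hC he)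
  exact (eq_of_subset_of_card_le (hM.2 C (hM.1.of_cutCap_le hC he hcap)) (hcard heq)).symm

/-- With no `(s,t)`-cuts, both capacities in `Vital` are the junk value `sInf ∅`. -/
theorem Vital.ne (hv : Vital E w s t e) : s ≠ t := by
  rintro rfl
  simp [Vital, minCutCap, IsCut] at hv

end Cuts

section MinCuts

variable {E : Finset (V × V)} {w : V × V → ℝ} {s t : V} {e e₁ e₂ : V × V}
  {C M M₁ M₂ : Finset V}

theorem finite_setOf_cutCap (E : Finset (V × V)) (w : V × V → ℝ) (s t : V) :
    {x | ∃ C : Finset V, IsCut s t C ∧ cutCap E w C = x}.Finite :=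
  (Set.finite_range (cutCap E w)).subset fun _ ⟨C, _, hC⟩ => ⟨C, hC⟩

theorem minCutCap_le_cutCap (hC : IsCut s t C) : minCutCap E w s t ≤ cutCap E w C :=
  csInf_le (finite_setOf_cutCap E w s t).bddBelow ⟨C, hC, rfl⟩

theorem exists_isCut_cutCap_eq_minCutCap (E : Finset (V × V)) (w : V × V → ℝ) (hst : s ≠ t) :
    ∃ C, IsCut s t C ∧ cutCap E w C = minCutCap E w s t :=
  Set.Nonempty.csInf_mem (s := {x | ∃ C : Finset V, IsCut s t C ∧ cutCap E w C = x})
    ⟨_, {s}, ⟨mem_singleton_self s, by simpa using hst.symm⟩, rfl⟩ (finite_setOf_cutCap E w s t)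

theorem Vital.exists_cutCap_sub_lt (hv : Vital E w s t e) :
    ∃ D, IsCut s t D ∧ Contributes e D ∧ cutCap E w D - w e < minCutCap E w s t := by
  obtain ⟨D, hD, hDmin⟩ := exists_isCut_cutCap_eq_minCutCap (E.erase e) w hv.ne
  have hlt : cutCap (E.erase e) w D < minCutCap E w s t := hDmin ▸ hv.2
  by_cases he : Contributes e D
  · exact ⟨D, hD, he, cutCap_erase_of_contributes hv.1 he ▸ hlt⟩
  · rw [cutCap_erase_of_not_contributes he] at hlt
    exact absurd (minCutCap_le_cutCap hD) hlt.not_ge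

theorem Vital.cutCap_sub_lt (hv : Vital E w s t e) (hM : IsMincutFor E w s t e M) :
    cutCap E w M - w e < minCutCap E w s t := by
  obtain ⟨D, hD, he, hlt⟩ := hv.exists_cutCap_sub_lt
  linarith [hM.2.2 D hD he]

theorem exists_isMinimalMincutFor (hw : ∀ e ∈ E, 0 ≤ w e)
    (h : ∃ C, IsCut s t C ∧ Contributes e C) :
    ∃ M, IsMinimalMincutFor E w s t e M := by
  classical
  obtain ⟨M, hMT, hmin⟩ := (univ.filter fun C => IsCut s t C ∧ Contributes e C).exists_min_image
    (fun C => toLex (cutCap E w C, C.card)) (h.imp fun _ hC => mem_filter.2 ⟨mem_univ _, hC⟩)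
  simp only [mem_filter, mem_univ, true_and, and_imp] at hMT hmin
  have hM : IsMincutFor E w s t e M :=
    ⟨hMT.1, hMT.2, fun C hC he => (Prod.Lex.toLex_le_toLex'.1 (hmin C hC he)).1⟩
  refine ⟨M, hM, fun C hC => ?_⟩
  have hU := hM.2.2 _ (hM.1.union hC.1) (hM.2.1.union hC.2.1)
  have hCM := hC.2.2 M hM.1 hM.2.1
  have hsub := cutCap_inter_add_cutCap_union_le hw M C
  have hI := Prod.Lex.toLex_le_toLex'.1 (hmin (M ∩ C) (hM.1.inter hC.1) (hM.2.1.inter hC.2.1))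
  have hcard : M.card ≤ (M ∩ C).card := hI.2 (le_antisymm hI.1 (by linarith))
  exact inter_eq_left.1 (eq_of_subset_of_card_le inter_subset_left hcard)

/-- Otherwise `e₁` runs from `M₁ \ M₂` to `M₂ \ M₁`, and uncrossing pushes `M₁ ∩ M₂` or `M₁ ∪ M₂`
below the minimum cut capacity. -/
theorem Vital.fst_mem_of_snd_mem (hw : ∀ e ∈ E, 0 ≤ w e) (hv₁ : Vital E w s t e₁)
    (hv₂ : Vital E w s t e₂) (hM₁ : IsMincutFor E w s t e₁ M₁) (hM₂ : IsMincutFor E w s t e₂ M₂)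
    (hsnd : e₁.2 ∈ M₂) : e₁.1 ∈ M₂ := by
  by_contra hfst
  have hsub := cutCap_inter_add_cutCap_union E w M₁ M₂
  have hcross₁ : w e₁ ≤ crossCap E w M₁ M₂ :=
    le_crossCap hw hv₁.1 (mem_sdiff.2 ⟨hM₁.2.1.1, hfst⟩) (mem_sdiff.2 ⟨hsnd, hM₁.2.1.2⟩)
  have hI := minCutCap_le_cutCap (E := E) (w := w) (hM₁.1.inter hM₂.1)
  have hU := minCutCap_le_cutCap (E := E) (w := w) (hM₁.1.union hM₂.1)
  have hμ₁ := hv₁.cutCap_sub_lt hM₁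
  have hμ₂ := hv₂.cutCap_sub_lt hM₂
  obtain ⟨hfst₂, hsnd₂⟩ := hM₂.2.1
  by_cases hfst₂' : e₂.1 ∈ M₁
  · have hM₂I := hM₂.2.2 _ (hM₁.1.inter hM₂.1)
      ⟨mem_inter.2 ⟨hfst₂', hfst₂⟩, fun h => hsnd₂ (mem_inter.1 h).2⟩
    linarith [crossCap_nonneg hw M₂ M₁]
  by_cases hsnd₂' : e₂.2 ∈ M₁
  · linarith [le_crossCap hw hv₂.1 (mem_sdiff.2 ⟨hfst₂, hfst₂'⟩) (mem_sdiff.2 ⟨hsnd₂', hsnd₂⟩)]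
  · have hM₂U := hM₂.2.2 _ (hM₁.1.union hM₂.1) ⟨mem_union_right M₁ hfst₂, by simp [hsnd₂, hsnd₂']⟩
    linarith [crossCap_nonneg hw M₂ M₁]

theorem fst_mem_iff_snd_mem_of_toLex_le (hw : ∀ e ∈ E, 0 ≤ w e) (hv₁ : Vital E w s t e₁)
    (hv₂ : Vital E w s t e₂) (hM₁ : IsMinimalMincutFor E w s t e₁ M₁)
    (hM₂ : IsMincutFor E w s t e₂ M₂) (hne : M₂ ≠ M₁)
    (hle : toLex (cutCap E w M₂, M₂.card) ≤ toLex (cutCap E w M₁, M₁.card)) :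
    e₁.1 ∈ M₂ ↔ e₁.2 ∈ M₂ :=
  ⟨fun hfst => by_contra fun hsnd => hne (hM₁.eq_of_contributes hM₂.1 ⟨hfst, hsnd⟩ hle),
    hv₁.fst_mem_of_snd_mem hw hv₂ hM₁.1 hM₂⟩

theorem card_le_card_sub_one_of_isMinimalMincutFor (hw : ∀ e ∈ E, 0 ≤ w e)
    {𝒢 : Finset (Finset V)}
    (h𝒢 : ∀ M ∈ 𝒢, ∃ e, Vital E w s t e ∧ IsMinimalMincutFor E w s t e M) :
    𝒢.card ≤ Fintype.card V - 1 := by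
  have ht : {t} ∉ 𝒢 := fun h =>
    let ⟨_, _, hM⟩ := h𝒢 _ h
    hM.1.1.2 (mem_singleton_self t)
  have hind : LinearIndepOn ℝ (fun M : Finset V => (M : Set V).indicator (1 : V → ℝ))
      ↑(insert {t} 𝒢) := by
    refine linearIndepOn_of_exists_separating fun S hS hne => ?_
    by_cases htS : {t} ∈ S
    · refine ⟨{t}, htS, .proj t, by simp, fun M hM hMt => ?_⟩
      obtain ⟨_, _, hM'⟩ := h𝒢 M ((mem_insert.1 (hS hM)).resolve_left hMt)
      simp [hM'.1.1.2]
    have hS𝒢 : S ⊆ 𝒢 := fun M hM =>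
      (mem_insert.1 (hS hM)).resolve_left (ne_of_mem_of_not_mem hM htS)
    obtain ⟨M₁, hM₁, hmax⟩ := S.exists_max_image (fun M => toLex (cutCap E w M, M.card)) hne
    obtain ⟨e₁, hv₁, hM₁'⟩ := h𝒢 M₁ (hS𝒢 hM₁)
    refine ⟨M₁, hM₁, .proj e₁.1 - .proj e₁.2,
      by simp [hM₁'.1.2.1.1, hM₁'.1.2.1.2], fun M₂ hM₂ hne => ?_⟩
    obtain ⟨e₂, hv₂, hM₂'⟩ := h𝒢 M₂ (hS𝒢 hM₂)
    have hsep := fst_mem_iff_snd_mem_of_toLex_le hw hv₁ hv₂ hM₁' hM₂'.1 hne (hmax M₂ hM₂)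
    simp [Set.indicator_apply, hsep]
  have hcard := hind.fintype_card_le_finrank
  simp only [Module.finrank_fintype_fun_eq_card, coe_sort_coe, Fintype.card_coe,
    card_insert_of_notMem ht] at hcard
  omega

end MinCuts

theorem mincut_cover_general (E : Finset (V × V)) (w : V × V → ℝ) (s t : V)
    (hpos : ∀ e ∈ E, 0 < w e) :
    ∃ 𝒞 : Finset (Finset V), 𝒞.card ≤ Fintype.card V - 1 ∧
      ∀ e ∈ E, Vital E w s t e → ∃ C ∈ 𝒞, IsMincutFor E w s t e C := by
  classical
  have hw : ∀ e ∈ E, 0 ≤ w e := fun e he => (hpos e he).le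
  refine ⟨univ.filter fun M => ∃ e, Vital E w s t e ∧ IsMinimalMincutFor E w s t e M,
    card_le_card_sub_one_of_isMinimalMincutFor hw fun M hM => (mem_filter.1 hM).2,
    fun e _ hv => ?_⟩
  obtain ⟨D, hD, he, -⟩ := hv.exists_cutCap_sub_lt
  obtain ⟨M, hM⟩ := exists_isMinimalMincutFor hw ⟨D, hD, he⟩
  exact ⟨M, mem_filter.2 ⟨mem_univ M, e, hv, hM⟩, hM.1⟩

/-- Mincut Cover: there is a set of at most `n - 1` (s,t)-cuts containing, for each
vital edge `e`, at least one mincut for `e`. -/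
theorem mincut_cover (E : Finset (V × V)) (w : V × V → ℝ) (s t : V)
    (hst : s ≠ t) (hpos : ∀ e ∈ E, 0 < w e) :
    ∃ 𝒞 : Finset (Finset V), 𝒞.card ≤ Fintype.card V - 1 ∧
      ∀ e ∈ E, Vital E w s t e → ∃ C ∈ 𝒞, IsMincutFor E w s t e C :=
  mincut_cover_general E w s t hpos
end
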